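/- If φ: R^n → R is a C² strictly convex function and T = ∇φ pushes the density ρ₀ forward to the density ρ₁ (both positive and continuous), then φ satisfies the Monge–Ampère equation det(D²φ(x)) = ρ₀(x)/ρ₁(∇φ(x)) for all x. -/

import Mathlib

/-!
The gradient `T = ∇φ` has positive definite derivative, so `⟪T b - T a, b - a⟫ > 0` for
`a ≠ b` and `T` is injective. The change of variables formula for injective differentiable
maps then turns the pushforward identity into `ρ₀ dx = |det DT| · ρ₁ ∘ T dx` as measures,
so the two continuous densities agree almost everywhere, hence everywhere. Finally
`det DT > 0`, since `DT` is joined to the identity by maps whose quadratic form stays positive.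
-/

open MeasureTheory Function
open scoped InnerProductSpace ENNReal

section InnerPositive

variable {E : Type*} [NormedAddCommGroup E] [InnerProductSpace ℝ E]

lemma ContinuousLinearMap.det_ne_zero_of_forall_inner_pos [FiniteDimensional ℝ E]
    {A : E →L[ℝ] E} (hA : ∀ v, v ≠ 0 → 0 < ⟪v, A v⟫_ℝ) : A.det ≠ 0 := by
  intro hdet
  obtain ⟨v, hv, hv0⟩ := SetLike.exists_of_lt (LinearMap.bot_lt_ker_of_det_eq_zero hdet)
  have hAv : A v = 0 := hv
  simpa [hAv] using hA v (by simpa using hv0)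

lemma ContinuousLinearMap.det_pos_of_forall_inner_pos [FiniteDimensional ℝ E]
    {A : E →L[ℝ] E} (hA : ∀ v, v ≠ 0 → 0 < ⟪v, A v⟫_ℝ) : 0 < A.det := by
  let B : ℝ → E →L[ℝ] E := fun t => (1 - t) • ContinuousLinearMap.id ℝ E + t • A
  have hB_cont : Continuous fun t => (B t).det :=
    ContinuousLinearMap.continuous_det.comp (by fun_prop)
  have hB_ne : ∀ t ∈ Set.Icc (0 : ℝ) 1, (B t).det ≠ 0 := by
    refine fun t ht => det_ne_zero_of_forall_inner_pos fun v hv => ?_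
    have hvv : 0 < ⟪v, v⟫_ℝ := real_inner_self_pos.2 hv
    have := (convex_Ioi (0 : ℝ)) hvv (hA v hv) (sub_nonneg.2 ht.2) ht.1 (sub_add_cancel 1 t)
    simpa [B, inner_add_right, inner_smul_right] using this
  have hB0 : (B 0).det = 1 := by simp [B, ContinuousLinearMap.det]
  have hB1 : (B 1).det = A.det := by simp [B]
  by_contra! hle
  obtain ⟨t, ht, ht0⟩ := intermediate_value_Icc' zero_le_one hB_cont.continuousOn
    (show (0 : ℝ) ∈ Set.Icc (B 1).det (B 0).det by rw [hB0, hB1]; exact ⟨hle, zero_le_one⟩)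
  exact hB_ne t ht ht0

/-- Along the segment from `a` to `b`, `t ↦ ⟪f (a + t • (b - a)), b - a⟫` has positive
derivative. -/
lemma inner_sub_sub_pos_of_forall_inner_fderiv_pos {f : E → E} {f' : E → E →L[ℝ] E}
    (hf : ∀ x, HasFDerivAt f (f' x) x) (hpos : ∀ x v, v ≠ 0 → 0 < ⟪v, f' x v⟫_ℝ)
    {a b : E} (hab : a ≠ b) : 0 < ⟪f b - f a, b - a⟫_ℝ := by
  set w := b - a
  have hw : w ≠ 0 := sub_ne_zero.2 hab.symm
  let g : ℝ → ℝ := fun t => ⟪f (a + t • w), w⟫_ℝ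
  have hg : ∀ t, HasDerivAt g ⟪f' (a + t • w) w, w⟫_ℝ t := fun t => by
    have hline : HasDerivAt (fun t : ℝ => a + t • w) w t := by
      simpa using ((hasDerivAt_id t).smul_const w).const_add a
    simpa using ((hf _).comp_hasDerivAt t hline).inner ℝ (hasDerivAt_const t w)
  have hmono : StrictMono g := strictMono_of_deriv_pos fun t => by
    rw [(hg t).deriv, real_inner_comm]
    exact hpos _ w hw
  have h01 := hmono zero_lt_one
  simp only [g, zero_smul, add_zero, one_smul, w, add_sub_cancel] at h01
  rw [inner_sub_left]
  linarith

lemma injective_of_forall_inner_fderiv_pos {f : E → E} {f' : E → E →L[ℝ] E}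
    (hf : ∀ x, HasFDerivAt f (f' x) x) (hpos : ∀ x v, v ≠ 0 → 0 < ⟪v, f' x v⟫_ℝ) :
    Injective f := by
  intro a b hfab
  by_contra hab
  simpa [hfab] using inner_sub_sub_pos_of_forall_inner_fderiv_pos hf hpos hab

end InnerPositive

lemma withDensity_eq_withDensity_abs_det_mul_of_map_eq {E : Type*} [NormedAddCommGroup E]
    [NormedSpace ℝ E] [FiniteDimensional ℝ E] [MeasurableSpace E] [BorelSpace E]
    (μ : Measure E) [μ.IsAddHaarMeasure] {f : E → E} {f' : E → E →L[ℝ] E}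
    (hf : ∀ x, HasFDerivAt f (f' x) x) (hinj : Injective f) {ρ₀ ρ₁ : E → ℝ≥0∞}
    (hpush : (μ.withDensity ρ₀).map f = μ.withDensity ρ₁) :
    μ.withDensity ρ₀ = μ.withDensity fun x => ENNReal.ofReal |(f' x).det| * ρ₁ (f x) := by
  have hf_meas : Measurable f :=
    (continuous_iff_continuousAt.2 fun x => (hf x).continuousAt).measurable
  ext s hs
  have himage : MeasurableSet (f '' s) :=
    measurable_image_of_fderivWithin hs (fun x _ => (hf x).hasFDerivWithinAt) hinj.injOn
  rw [withDensity_apply _ hs, withDensity_apply _ hs,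
    ← lintegral_image_eq_lintegral_abs_det_fderiv_mul μ hs (fun x _ => (hf x).hasFDerivWithinAt)
      hinj.injOn, ← withDensity_apply _ himage, ← hpush,
    Measure.map_apply hf_meas himage, hinj.preimage_image, withDensity_apply _ hs]

lemma Continuous.eq_of_withDensity_eq {X : Type*} [TopologicalSpace X] [MeasurableSpace X]
    [OpensMeasurableSpace X] (μ : Measure X) [μ.IsOpenPosMeasure] [SigmaFinite μ]
    {f g : X → ℝ≥0∞} (hf : Continuous f) (hg : Continuous g)
    (hfg : μ.withDensity f = μ.withDensity g) : f = g :=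
  (hf.ae_eq_iff_eq μ hg).1 <| (withDensity_eq_iff_of_sigmaFinite hf.measurable.aemeasurable
    hg.measurable.aemeasurable).1 hfg

/-- Monge–Ampère equation: if `φ : ℝⁿ → ℝ` is C² and strictly convex (Hessian positive
definite) and `T = ∇φ` pushes the density `ρ₀` forward to the density `ρ₁` (both positive
and continuous), then `det D²φ(x) = ρ₀ x / ρ₁ (∇φ x)` for all `x`. -/
theorem monge_ampere_of_pushforward (n : ℕ)
    (φ : EuclideanSpace ℝ (Fin n) → ℝ) (hφ : ContDiff ℝ 2 φ)
    (hconv : ∀ x, ∀ v : EuclideanSpace ℝ (Fin n), v ≠ 0 →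
      (0:ℝ) < inner ℝ v ((fderiv ℝ (gradient φ) x) v : EuclideanSpace ℝ (Fin n)))
    (ρ₀ ρ₁ : EuclideanSpace ℝ (Fin n) → ℝ)
    (hρ₀pos : ∀ x, 0 < ρ₀ x) (hρ₁pos : ∀ x, 0 < ρ₁ x)
    (hρ₀cont : Continuous ρ₀) (hρ₁cont : Continuous ρ₁)
    (hpush : Measure.map (gradient φ) (volume.withDensity fun x => ENNReal.ofReal (ρ₀ x))
      = volume.withDensity fun y => ENNReal.ofReal (ρ₁ y)) :
    ∀ x, (fderiv ℝ (gradient φ) x).det = ρ₀ x / ρ₁ (gradient φ x) := by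
  set T := gradient φ
  have hT : ContDiff ℝ 1 T :=
    (InnerProductSpace.toDual ℝ _).symm.contDiff.comp (hφ.fderiv_right le_rfl)
  have hT_deriv : ∀ x, HasFDerivAt T (fderiv ℝ T x) x :=
    fun x => ((hT.differentiable one_ne_zero) x).hasFDerivAt
  have hdet_pos : ∀ x, 0 < (fderiv ℝ T x).det :=
    fun x => ContinuousLinearMap.det_pos_of_forall_inner_pos (hconv x)
  have hdensity := withDensity_eq_withDensity_abs_det_mul_of_map_eq volume hT_deriv
    (injective_of_forall_inner_fderiv_pos hT_deriv hconv) hpush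
  have hJ_cont : Continuous fun x => (fderiv ℝ T x).det * ρ₁ (T x) :=
    (ContinuousLinearMap.continuous_det.comp (hT.continuous_fderiv one_ne_zero)).mul
      (hρ₁cont.comp hT.continuous)
  simp_rw [← ENNReal.ofReal_mul (abs_nonneg _), abs_of_pos (hdet_pos _)] at hdensity
  have heq := (ENNReal.continuous_ofReal.comp hρ₀cont).eq_of_withDensity_eq volume
    (ENNReal.continuous_ofReal.comp hJ_cont) hdensity
  intro x
  rw [eq_div_iff (hρ₁pos _).ne', ← ENNReal.ofReal_eq_ofReal_iff
    (mul_pos (hdet_pos x) (hρ₁pos _)).le (hρ₀pos x).le]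
  exact (congrFun heq x).symm
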